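/- Let Ω ⊂ ℂⁿ be open, K ⊂ Ω compact with K ⊂ (ℂ*)ⁿ, and J ⊂ Ω compact. Then the family of functions ℬ := { ζ ↦ δ_{(|α|)} / ∏_j (w_j − ζ_j/z_j)^{α_j+1} : z ∈ K, w ∈ ∂₀(z⁻¹Ω) with the product over j, α ∈ ℕⁿ } is bounded in H(Ω), where δ_{(k)} = δ₀⋯δ_k for a positive null-sequence (δ_k), provided inf over the relevant parameters of |w_j − ζ_j/z_j| for ζ ∈ J is bounded below by dist(J,∂Ω)/‖ζ‖_K > 0. -/
import Mathlib


open Finset Filter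

/-- The family
`ℬ = {ζ ↦ δ_{(|α|)} / ∏_j (w_j − ζ_j/z_j)^{α_j+1}}`, indexed by `z ∈ K`,
`w ∈ ∂₀(z⁻¹Ω)` and `α ∈ ℕⁿ`, is bounded in `H(Ω)` (uniformly on the compact
`J ⊆ Ω`), provided the quantities `|w_j − η_j/z_j|` (η ∈ J) are bounded below
by a positive constant `c` (cf. `c = dist(J,∂Ω)/‖ζ‖_K > 0`). -/
theorem stmt14 (n : ℕ) (Ω : Set (Fin n → ℂ)) (hΩ : IsOpen Ω)
    (K : Set (Fin n → ℂ)) (hK : IsCompact K) (hKΩ : K ⊆ Ω)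
    (hKstar : ∀ z ∈ K, ∀ j, z j ≠ 0)
    (J : Set (Fin n → ℂ)) (hJ : IsCompact J) (hJΩ : J ⊆ Ω)
    (δ : ℕ → ℝ) (hpos : ∀ k, 0 < δ k) (hnull : Tendsto δ atTop (nhds 0))
    -- W z is the distinguished boundary ∂₀(z⁻¹Ω)
    (W : (Fin n → ℂ) → Set (Fin n → ℂ))
    (c : ℝ) (hc : 0 < c)
    (hlow : ∀ z ∈ K, ∀ w ∈ W z, ∀ η ∈ J, ∀ j, c ≤ ‖w j - η j / z j‖) :
    ∃ B : ℝ, ∀ z ∈ K, ∀ w ∈ W z, ∀ α : Fin n → ℕ, ∀ ζ ∈ J,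
      (∏ i ∈ Finset.range ((∑ j, α j) + 1), δ i) *
        ‖∏ j, (w j - ζ j / z j) ^ (α j + 1)‖⁻¹ ≤ B := by
  -- choose k0 beyond which δ k < c/2
  have h2 : (0:ℝ) < c / 2 := by linarith
  have hev : ∀ᶠ k in atTop, δ k < c / 2 := hnull.eventually (gt_mem_nhds h2)
  obtain ⟨k0, hk0⟩ := eventually_atTop.mp hev
  set f : ℕ → ℝ := fun s => (∏ i ∈ Finset.range (s + 1), δ i) * (c ^ (s + n))⁻¹ with hf
  have hfpos : ∀ s, 0 < f s := fun s => by
    apply mul_pos (Finset.prod_pos fun i _ => hpos i)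
    positivity
  -- f is eventually decreasing
  have hdec : ∀ s ≥ k0, f s ≤ f k0 := by
    intro s hs
    induction s, hs using Nat.le_induction with
    | base => exact le_refl _
    | succ s hs ih =>
      have hstep : f (s + 1) = f s * (δ (s + 1) / c) := by
        simp only [hf]
        have he : (s + 1) + n = (s + n) + 1 := by omega
        rw [Finset.prod_range_succ, he, pow_succ, mul_inv]
        field_simp
      have hδ : δ (s + 1) / c ≤ 1 := by
        have := hk0 (s + 1) (by omega)
        rw [div_le_one hc]; linarith
      calc f (s + 1) = f s * (δ (s + 1) / c) := hstep
        _ ≤ f s * 1 := by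
            apply mul_le_mul_of_nonneg_left hδ (le_of_lt (hfpos s))
        _ = f s := mul_one _
        _ ≤ f k0 := ih
  set B : ℝ := (Finset.range (k0 + 1)).sup' (by simp) f with hB
  have hfB : ∀ s, f s ≤ B := by
    intro s
    rcases le_or_gt s k0 with h | h
    · exact Finset.le_sup' f (by simp; omega)
    · calc f s ≤ f k0 := hdec s (le_of_lt h)
        _ ≤ B := Finset.le_sup' f (by simp)
  refine ⟨B, fun z hz w hw α ζ hζ => ?_⟩
  set s := ∑ j, α j with hs
  have hnorm : c ^ (s + n) ≤ ‖∏ j, (w j - ζ j / z j) ^ (α j + 1)‖ := by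
    rw [norm_prod]
    have : c ^ (s + n) = ∏ j, c ^ (α j + 1) := by
      rw [Finset.prod_pow_eq_pow_sum]
      congr 1
      rw [hs, Finset.sum_add_distrib]
      simp
    rw [this]
    apply Finset.prod_le_prod (fun j _ => by positivity)
    intro j _
    rw [norm_pow]
    exact pow_le_pow_left₀ (le_of_lt hc) (hlow z hz w hw ζ hζ j) _
  have hquot : (∏ i ∈ Finset.range (s + 1), δ i) *
      ‖∏ j, (w j - ζ j / z j) ^ (α j + 1)‖⁻¹ ≤ f s := by
    apply mul_le_mul_of_nonneg_left _ (le_of_lt (Finset.prod_pos fun i _ => hpos i))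
    exact inv_anti₀ (by positivity) hnorm
  exact le_trans hquot (hfB s)
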